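/- Let M be a pointed cofibrantly generated monoidal model category satisfying condition (♠) in which the domains and codomains of the generating (trivial) cofibrations are small with respect to the entire category, and let O be a C-colored operad in M. Then the entrywise-defined adjunction coker : Alg(O⃗□; M⃗□) ⇄ Alg(O⃗⊗; M⃗⊗) : ker is a Quillen adjunction, where Smith O-ideals Alg(O⃗□; M⃗□) carry the model structure with weak equivalences and fibrations defined entrywise in M, and Alg(O⃗⊗; M⃗⊗) carries the model structure with weak equivalences and fibrations defined entrywise in the injective model structure M⃗⊗_inj. -/

import Mathlib

/-! Common framework for formalizing "Smith Ideals of Operadic Algebras in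
Monoidal Model Categories" (White–Yau). -/

universe w v u

open CategoryTheory Category Limits MonoidalCategory Opposite

namespace SmithIdeals

variable {M : Type u} [Category.{v} M]

/-- A model structure on a category: three classes of maps (weak equivalences,
cofibrations, fibrations) satisfying the usual model category axioms
(two-out-of-three, retract closure, lifting, factorization). -/
structure ModelStructure (M : Type u) [Category.{v} M] : Type (max u (v + 1)) where
  weq : MorphismProperty M
  cof : MorphismProperty M
  fib : MorphismProperty M
  /-- two-out-of-three -/
  weq_comp : ∀ {X Y Z : M} (f : X ⟶ Y) (g : Y ⟶ Z), weq f → weq g → weq (f ≫ g)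
  weq_cancel_left : ∀ {X Y Z : M} (f : X ⟶ Y) (g : Y ⟶ Z), weq f → weq (f ≫ g) → weq g
  weq_cancel_right : ∀ {X Y Z : M} (f : X ⟶ Y) (g : Y ⟶ Z), weq g → weq (f ≫ g) → weq f
  /-- the three classes are closed under retracts (in the arrow category) -/
  weq_retract : ∀ (f g : Arrow M) (i : f ⟶ g) (r : g ⟶ f), i ≫ r = 𝟙 f → weq g.hom → weq f.hom
  cof_retract : ∀ (f g : Arrow M) (i : f ⟶ g) (r : g ⟶ f), i ≫ r = 𝟙 f → cof g.hom → cof f.hom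
  fib_retract : ∀ (f g : Arrow M) (i : f ⟶ g) (r : g ⟶ f), i ≫ r = 𝟙 f → fib g.hom → fib f.hom
  /-- lifting axioms -/
  lift_cof_trivFib : ∀ {A B X Y : M} (i : A ⟶ B) (p : X ⟶ Y),
    cof i → fib p → weq p → HasLiftingProperty i p
  lift_trivCof_fib : ∀ {A B X Y : M} (i : A ⟶ B) (p : X ⟶ Y),
    cof i → weq i → fib p → HasLiftingProperty i p
  /-- factorization axioms -/
  fact_cof_trivFib : ∀ {X Y : M} (f : X ⟶ Y),
    ∃ (Z : M) (g : X ⟶ Z) (h : Z ⟶ Y), cof g ∧ fib h ∧ weq h ∧ g ≫ h = f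
  fact_trivCof_fib : ∀ {X Y : M} (f : X ⟶ Y),
    ∃ (Z : M) (g : X ⟶ Z) (h : Z ⟶ Y), cof g ∧ weq g ∧ fib h ∧ g ≫ h = f

namespace ModelStructure

variable (σ : ModelStructure M)

/-- Trivial cofibrations. -/
def trivCof : MorphismProperty M := fun _ _ f => σ.cof f ∧ σ.weq f

/-- Trivial fibrations. -/
def trivFib : MorphismProperty M := fun _ _ f => σ.fib f ∧ σ.weq f

/-- An object is cofibrant. (In a model category this lifting-theoretic
formulation is equivalent to `∅ ⟶ X` being a cofibration.) -/
def Cofibrant (X : M) : Prop :=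
  ∀ {Y Z : M} (p : Y ⟶ Z), σ.trivFib p → ∀ h : X ⟶ Z, ∃ l : X ⟶ Y, l ≫ p = h

/-- An object is fibrant.  (Dually, this is equivalent to `X ⟶ *` being
a fibration.) -/
def Fibrant (X : M) : Prop :=
  ∀ {A B : M} (i : A ⟶ B), σ.trivCof i → ∀ h : A ⟶ X, ∃ e : B ⟶ X, i ≫ e = h

end ModelStructure

section Smallness

/-- The cocone over the restriction of a chain `F` to `Set.Iio j`, with apex `F.obj j`. -/
@[simps]
def chainCocone {Γ : Type v} [Preorder Γ] (F : Γ ⥤ M) (j : Γ) :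
    Cocone ((Monotone.functor (f := fun x : Set.Iio j => (x.1 : Γ))
      (fun _ _ h => h)).comp F) where
  pt := F.obj j
  ι := { app := fun x => F.map (homOfLE x.2.le)
         naturality := fun x y h => by
          dsimp [Monotone.functor]
          rw [← F.map_comp, homOfLE_comp, comp_id] }

/-- A chain indexed by an ordinal is smooth (continuous) if at each limit stage the
restriction exhibits the value as the colimit of the earlier stages. -/
def IsSmoothChain {o : Ordinal.{v}} (F : o.ToType ⥤ M) : Prop :=
  ∀ j : o.ToType, Order.IsSuccLimit j → Nonempty (IsColimit (chainCocone F j))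

/-- `K` is `κ`-small relative to the entire category: for every ordinal `o` of
cofinality at least `κ` and every smooth chain `F : o.ToType ⥤ M`, the canonical map
`colim Hom(K, F·) ⟶ Hom(K, colim F)` is bijective. -/
def IsSmallRelEntire [HasColimits M] (K : M) : Prop :=
  ∃ κ : Cardinal.{v}, κ.IsRegular ∧
    ∀ (o : Ordinal.{v}), κ ≤ (Ordinal.cof o) → ∀ (F : o.ToType ⥤ M), IsSmoothChain F →
      Function.Bijective
        (colimit.desc (F ⋙ coyoneda.obj (op K))
          ((coyoneda.obj (op K)).mapCocone (colimit.cocone F)))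

/-- A class of maps is stable under transfinite composition. -/
def StableUnderTransfiniteComposition [HasColimits M] (W : MorphismProperty M) : Prop :=
  ∀ (o : Ordinal.{v}) (F : o.ToType ⥤ M), IsSmoothChain F →
    (∀ (j k : o.ToType) (h : j ⋖ k), W (F.map (homOfLE h.le))) →
    ∀ (b : o.ToType), (∀ x, b ≤ x) → W (colimit.ι F b)

/-- A class of maps is stable under pushout (cobase change). -/
def StableUnderPushout (W : MorphismProperty M) : Prop :=
  ∀ {A B A' B' : M} {f : A ⟶ B} {s : A ⟶ A'} {f' : A' ⟶ B'} {t : B ⟶ B'},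
    IsPushout s f f' t → W f → W f'

end Smallness

section CofibrantGeneration

/-- Witness data exhibiting a model structure as cofibrantly generated: a set `I` of
generating cofibrations and a set `J` of generating trivial cofibrations which determine
the (trivial) fibrations by the right lifting property. -/
structure CofibGenData (σ : ModelStructure M) : Type (max u v) where
  I : Set (Arrow M)
  J : Set (Arrow M)
  I_cof : ∀ i ∈ I, σ.cof i.hom
  J_trivCof : ∀ j ∈ J, σ.trivCof j.hom
  fib_iff : ∀ {X Y : M} (p : X ⟶ Y),
    σ.fib p ↔ ∀ j ∈ J, HasLiftingProperty j.hom p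
  trivFib_iff : ∀ {X Y : M} (p : X ⟶ Y),
    σ.trivFib p ↔ ∀ i ∈ I, HasLiftingProperty i.hom p

/-- The domains of `I` and `J` permit the small object argument; here we use the
stronger requirement of smallness relative to the entire category, i.e. strong
cofibrant generation. -/
def CofibGenData.SmallDomains [HasColimits M] {σ : ModelStructure M} (d : CofibGenData σ) : Prop :=
  ∀ f ∈ d.I ∪ d.J, IsSmallRelEntire f.left

/-- The codomains of `I` and `J` are small relative to the entire category. -/
def CofibGenData.SmallCodomains [HasColimits M] {σ : ModelStructure M} (d : CofibGenData σ) : Prop :=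
  ∀ f ∈ d.I ∪ d.J, IsSmallRelEntire f.right

/-- A strongly cofibrantly generated model structure: the domains of the generating
(trivial) cofibrations are small relative to the entire category. -/
def StronglyCofibrantlyGenerated [HasColimits M] (σ : ModelStructure M) : Prop :=
  ∃ d : CofibGenData σ, d.SmallDomains

end CofibrantGeneration

variable {N : Type u} [Category.{v} N]

/-- A biased tensor-like structure on a category: a bifunctor (in uncurried form)
together with a unit object. -/
structure TensorData (N : Type u) [Category.{v} N] : Type (max u v) where
  t : N → N → N
  tmap : ∀ {A B X Y : N}, (A ⟶ B) → (X ⟶ Y) → (t A X ⟶ t B Y)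
  unit : N
  tmap_id : ∀ (A X : N), tmap (𝟙 A) (𝟙 X) = 𝟙 (t A X)
  tmap_comp : ∀ {A B C X Y Z : N} (f : A ⟶ B) (f' : B ⟶ C) (g : X ⟶ Y) (g' : Y ⟶ Z),
    tmap (f ≫ f') (g ≫ g') = tmap f g ≫ tmap f' g'

namespace TensorData

/-- The tensor data underlying a monoidal category. -/
@[simps]
def ofMonoidal (M : Type u) [Category.{v} M] [MonoidalCategory M] : TensorData M where
  t X Y := X ⊗ Y
  tmap f g := f ⊗ₘ g
  unit := 𝟙_ M
  tmap_id _ _ := id_tensorHom_id _ _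
  tmap_comp _ _ _ _ := (tensorHom_comp_tensorHom _ _ _ _).symm

/-- Iterated (right-biased) tensor product of a finite family of objects. -/
def tFin (τ : TensorData N) : ∀ {n : ℕ}, (Fin n → N) → N
  | 0, _ => τ.unit
  | _ + 1, f => τ.t (f 0) (tFin τ fun i => f i.succ)

@[simp] theorem tFin_zero (τ : TensorData N) (f : Fin 0 → N) : tFin τ f = τ.unit := rfl
theorem tFin_succ (τ : TensorData N) {n : ℕ} (f : Fin (n + 1) → N) :
    tFin τ f = τ.t (f 0) (tFin τ fun i => f i.succ) := rfl

/-- Iterated tensor product of a finite family of morphisms. -/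
def tFinMap (τ : TensorData N) :
    ∀ {n : ℕ} {f g : Fin n → N}, (∀ i, f i ⟶ g i) → (tFin τ f ⟶ tFin τ g)
  | 0, _, _, _ => 𝟙 τ.unit
  | _ + 1, _, _, h => τ.tmap (h 0) (tFinMap τ fun i => h i.succ)

@[simp] theorem tFinMap_zero (τ : TensorData N) {f g : Fin 0 → N} (h : ∀ i, f i ⟶ g i) :
    tFinMap τ h = 𝟙 τ.unit := rfl
theorem tFinMap_succ (τ : TensorData N) {n : ℕ} {f g : Fin (n + 1) → N} (h : ∀ i, f i ⟶ g i) :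
    tFinMap τ h = τ.tmap (h 0) (tFinMap τ fun i => h i.succ) := rfl

theorem tFinMap_id (τ : TensorData N) : ∀ {n : ℕ} (f : Fin n → N),
    tFinMap τ (fun i => 𝟙 (f i)) = 𝟙 (tFin τ f) := by
  intro n
  induction n with
  | zero => intro f; rfl
  | succ n ih =>
      intro f
      rw [tFinMap_succ, ih]
      exact τ.tmap_id _ _

theorem tFinMap_comp (τ : TensorData N) :
    ∀ {n : ℕ} {f g h : Fin n → N} (α : ∀ i, f i ⟶ g i) (β : ∀ i, g i ⟶ h i),
    tFinMap τ (fun i => α i ≫ β i) = tFinMap τ α ≫ tFinMap τ β := by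
  intro n
  induction n with
  | zero => intro _ _ _ _ _; exact (comp_id _).symm
  | succ n ih =>
      intro f g h α β
      rw [tFinMap_succ, tFinMap_succ, tFinMap_succ, ih]
      exact τ.tmap_comp _ _ _ _

/-- The "tensor product" tensor data on the arrow category (the monoidal product of
`f` and `g` is `f ⊗ g : X₀ ⊗ Y₀ ⟶ X₁ ⊗ Y₁`), with unit `𝟙 : 𝟙 ⟶ 𝟙`. -/
@[simps]
def arrowTensor (M : Type u) [Category.{v} M] [MonoidalCategory M] : TensorData (Arrow M) where
  t f g := Arrow.mk (f.hom ⊗ₘ g.hom)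
  tmap {f f' g g'} α β := Arrow.homMk (u := α.left ⊗ₘ β.left) (v := α.right ⊗ₘ β.right)
    (by dsimp; rw [tensorHom_comp_tensorHom, tensorHom_comp_tensorHom, Arrow.w, Arrow.w])
  unit := Arrow.mk (𝟙 (𝟙_ M))
  tmap_id f g := by ext <;> simp
  tmap_comp f f' g g' := by ext <;> simp [tensorHom_comp_tensorHom]

section PP
variable [HasPushouts N]

/-- The pushout product of two objects of the arrow category, relative to arbitrary
tensor data `τ` on `N`. -/
noncomputable def ppObj (τ : TensorData N) (f g : Arrow N) : Arrow N :=
  Arrow.mk (pushout.desc (f := τ.tmap (𝟙 f.left) g.hom) (g := τ.tmap f.hom (𝟙 g.left))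
    (τ.tmap f.hom (𝟙 g.right)) (τ.tmap (𝟙 f.right) g.hom)
    (by rw [← τ.tmap_comp, ← τ.tmap_comp]; simp))

@[simp] theorem ppObj_left (τ : TensorData N) (f g : Arrow N) :
    (τ.ppObj f g).left = pushout (τ.tmap (𝟙 f.left) g.hom) (τ.tmap f.hom (𝟙 g.left)) := rfl
@[simp] theorem ppObj_right (τ : TensorData N) (f g : Arrow N) :
    (τ.ppObj f g).right = τ.t f.right g.right := rfl
theorem ppObj_hom (τ : TensorData N) (f g : Arrow N) :
    (τ.ppObj f g).hom = pushout.desc (τ.tmap f.hom (𝟙 g.right)) (τ.tmap (𝟙 f.right) g.hom)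
      (by rw [← τ.tmap_comp, ← τ.tmap_comp]; simp) := rfl

/-- The map between pushout-product domains induced by maps of arrows. -/
noncomputable def ppDom (τ : TensorData N) {f f' g g' : Arrow N} (α : f ⟶ f') (β : g ⟶ g') :
    (τ.ppObj f g).left ⟶ (τ.ppObj f' g').left :=
  pushout.map _ _ _ _ (τ.tmap α.left β.right) (τ.tmap α.right β.left)
      (τ.tmap α.left β.left)
      (by rw [← τ.tmap_comp, ← τ.tmap_comp]; simp [Arrow.w])
      (by rw [← τ.tmap_comp, ← τ.tmap_comp]; simp [Arrow.w])

theorem ppDom_w (τ : TensorData N) {f f' g g' : Arrow N} (α : f ⟶ f') (β : g ⟶ g') :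
    τ.ppDom α β ≫ (τ.ppObj f' g').hom = (τ.ppObj f g).hom ≫ τ.tmap α.right β.right := by
  dsimp only [ppDom, ppObj, pushout.map, Arrow.mk_left, Arrow.mk_right, Arrow.mk_hom]
  apply pushout.hom_ext
  · simp only [ppDom, ppObj_hom, Category.assoc, pushout.inl_desc, pushout.inl_desc_assoc]
    rw [← τ.tmap_comp, ← τ.tmap_comp]
    simp [Arrow.w]
  · simp only [ppDom, ppObj_hom, Category.assoc, pushout.inr_desc, pushout.inr_desc_assoc]
    rw [← τ.tmap_comp, ← τ.tmap_comp]
    simp [Arrow.w]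

/-- The pushout product tensor data on the arrow category of `N`, with a chosen
unit object `u` (which will be `∅ ⟶ 𝟙`). -/
noncomputable def pp (τ : TensorData N) (u : Arrow N) : TensorData (Arrow N) where
  t := τ.ppObj
  unit := u
  tmap {f f' g g'} α β := Arrow.homMk (u := τ.ppDom α β) (v := τ.tmap α.right β.right)
    (τ.ppDom_w α β)
  tmap_id f g := by
    ext
    · show τ.ppDom (𝟙 f) (𝟙 g) = 𝟙 _
      apply pushout.hom_ext <;> simp [ppDom, τ.tmap_id]
    · exact τ.tmap_id _ _
  tmap_comp α α' β β' := by
    ext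
    · show τ.ppDom (α ≫ α') (β ≫ β') = τ.ppDom α β ≫ τ.ppDom α' β'
      dsimp only [ppDom, ppObj, pushout.map, Arrow.mk_left, Arrow.mk_right, Arrow.mk_hom,
        Arrow.comp_left, Arrow.comp_right]
      apply pushout.hom_ext
      · erw [pushout.inl_desc, pushout.inl_desc_assoc, Category.assoc, pushout.inl_desc]; simp [τ.tmap_comp]
      · erw [pushout.inr_desc, pushout.inr_desc_assoc, Category.assoc, pushout.inr_desc]; simp [τ.tmap_comp]
    · exact τ.tmap_comp _ _ _ _

end PP

end TensorData


section Operads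

/-- The groupoid of `C`-profiles: objects are finite lists of colors, and maps are
permutations compatible with the colorings.  This is the groupoid `Σ_C`. -/
structure Profile (C : Type w) : Type w where
  toList : List C

namespace Profile

variable {C : Type w}

instance : Category.{0} (Profile C) where
  Hom p q := {σ : Fin p.toList.length ≃ Fin q.toList.length //
    ∀ i, q.toList.get (σ i) = p.toList.get i}
  id p := ⟨Equiv.refl _, fun _ => rfl⟩
  comp f g := ⟨f.1.trans g.1, fun i => (g.2 _).trans (f.2 i)⟩
  id_comp f := Subtype.ext (Equiv.ext fun i => rfl)
  comp_id f := Subtype.ext (Equiv.ext fun i => rfl)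
  assoc f g h := Subtype.ext (Equiv.ext fun i => rfl)

/-- The length of a profile. -/
def length (p : Profile C) : ℕ := p.toList.length

/-- The `i`-th color of a profile. -/
def col (p : Profile C) (i : Fin p.toList.length) : C := p.toList.get i

/-- Concatenation of a finite family of profiles. -/
def flatten {n : ℕ} (b : Fin n → Profile C) : Profile C :=
  ⟨(List.ofFn fun i => (b i).toList).flatten⟩

end Profile

variable {N : Type u} [Category.{v} N] {C : Type w}

/-- The category indexing `C`-colored symmetric sequences: `Σ_Cᵒᵖ × C`. -/
abbrev SymIndex (C : Type w) := (Profile C)ᵒᵖ × Discrete C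

/-- A `C`-colored operad (as structured data: a symmetric sequence with units and
composition maps) relative to tensor data `τ` on `N`. -/
structure OperadIn (τ : TensorData N) (C : Type w) : Type (max u v w) where
  seq : SymIndex C ⥤ N
  unit : ∀ c : C, τ.unit ⟶ seq.obj (op ⟨[c]⟩, ⟨c⟩)
  comp : ∀ (p : Profile C) (d : C) (b : Fin p.toList.length → Profile C),
    τ.t (seq.obj (op p, ⟨d⟩))
        (τ.tFin fun i => seq.obj (op (b i), ⟨p.toList.get i⟩))
      ⟶ seq.obj (op (Profile.flatten b), ⟨d⟩)

/-- The entries of an operad. -/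
def OperadIn.entry {τ : TensorData N} (O : OperadIn τ C) (p : Profile C) (d : C) : N :=
  O.seq.obj (op p, ⟨d⟩)

/-- An algebra over an operad (as structured data). -/
structure AlgebraIn (τ : TensorData N) (O : OperadIn τ C) : Type (max u v w) where
  carrier : C → N
  act : ∀ (p : Profile C) (d : C),
    τ.t (O.seq.obj (op p, ⟨d⟩)) (τ.tFin fun i => carrier (p.toList.get i)) ⟶ carrier d

/-- A morphism of algebras over an operad. -/
structure AlgHom {τ : TensorData N} {O : OperadIn τ C} (A B : AlgebraIn τ O) :
    Type (max v w) where
  app : ∀ c, A.carrier c ⟶ B.carrier c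
  comm : ∀ (p : Profile C) (d : C),
    A.act p d ≫ app d
      = τ.tmap (𝟙 (O.seq.obj (op p, ⟨d⟩))) (τ.tFinMap fun i => app (p.toList.get i))
          ≫ B.act p d

theorem AlgHom.ext' {τ : TensorData N} {O : OperadIn τ C} {A B : AlgebraIn τ O}
    {f g : AlgHom A B} (h : ∀ c, f.app c = g.app c) : f = g := by
  cases f; cases g
  congr 1
  funext c
  exact h c

instance AlgebraIn.category {τ : TensorData N} {O : OperadIn τ C} :
    Category.{max v w} (AlgebraIn τ O) where
  Hom A B := AlgHom A B
  id A := ⟨fun c => 𝟙 _, fun p d => by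
    rw [comp_id, τ.tFinMap_id, τ.tmap_id, id_comp]⟩
  comp {A B D} f g := ⟨fun c => f.app c ≫ g.app c, fun p d => by
    rw [← assoc, f.comm p d, assoc, g.comm p d, ← assoc, ← τ.tmap_comp, id_comp,
      ← τ.tFinMap_comp]⟩
  id_comp f := AlgHom.ext' fun c => id_comp _
  comp_id f := AlgHom.ext' fun c => comp_id _
  assoc f g h := AlgHom.ext' fun c => assoc _ _ _

@[simp] theorem AlgebraIn.id_app {τ : TensorData N} {O : OperadIn τ C} (A : AlgebraIn τ O)
    (c : C) : (𝟙 A : AlgHom A A).app c = 𝟙 (A.carrier c) := rfl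

@[simp] theorem AlgebraIn.comp_app {τ : TensorData N} {O : OperadIn τ C}
    {A B D : AlgebraIn τ O} (f : A ⟶ B) (g : B ⟶ D) (c : C) :
    (f ≫ g).app c = f.app c ≫ g.app c := rfl

/-- The forgetful functor from algebras to the underlying `C`-colored objects. -/
@[simps]
def forgetAlg (τ : TensorData N) (O : OperadIn τ C) : AlgebraIn τ O ⥤ (C → N) where
  obj A := A.carrier
  map f := f.app

end Operads

section ArrowOperads

variable (M : Type u) [Category.{v} M]

/-- The functor `L₀ : M ⥤ M⃗` sending `X` to `𝟙 : X ⟶ X`. -/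
@[simps]
def idArrowF : M ⥤ Arrow M where
  obj X := Arrow.mk (𝟙 X)
  map f := Arrow.homMk (u := f) (v := f) (by simp)

/-- The functor `L₁ : M ⥤ M⃗` sending `X` to `∅ ⟶ X`. -/
@[simps]
noncomputable def botArrowF [HasInitial M] : M ⥤ Arrow M where
  obj X := Arrow.mk (initial.to X)
  map f := Arrow.homMk (u := 𝟙 (⊥_ M)) (v := f) (by apply initial.hom_ext)
  map_id X := by ext <;> simp
  map_comp f g := by ext <;> simp

variable [MonoidalCategory M]

/-- Shorthand for the monoidal tensor data of `M`. -/
noncomputable abbrev monTD : TensorData M := TensorData.ofMonoidal M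

/-- Shorthand for the tensor-product tensor data of the arrow category `M⃗⊗`. -/
noncomputable abbrev arrTD : TensorData (Arrow M) := TensorData.arrowTensor M

/-- The pushout product tensor data on the arrow category, `M⃗□`, with its
monoidal unit `∅ ⟶ 𝟙`. -/
noncomputable abbrev ppArrTD [HasInitial M] [HasPushouts M] : TensorData (Arrow M) :=
  (monTD M).pp (Arrow.mk (initial.to (𝟙_ M)))

variable {M}

theorem tObj_idArrowF (X Y : M) :
    (arrTD M).t ((idArrowF M).obj X) ((idArrowF M).obj Y) = (idArrowF M).obj (X ⊗ Y) := by
  show Arrow.mk (𝟙 X ⊗ₘ 𝟙 Y) = Arrow.mk (𝟙 (X ⊗ Y))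
  rw [id_tensorHom_id]

theorem tFin_idArrowF {n : ℕ} (F : Fin n → M) :
    (arrTD M).tFin (fun i => (idArrowF M).obj (F i)) = (idArrowF M).obj ((monTD M).tFin F) := by
  induction n with
  | zero => rfl
  | succ n ih =>
      rw [TensorData.tFin_succ, TensorData.tFin_succ, ih (fun i => F i.succ)]
      show Arrow.mk (𝟙 (F 0) ⊗ₘ 𝟙 _) = _
      rw [id_tensorHom_id]
      rfl

/-- The operad `O⃗⊗ = L₀O` in the arrow category with the tensor product structure. -/
noncomputable def arrowTensorOperad {C : Type w} (O : OperadIn (monTD M) C) :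
    OperadIn (arrTD M) C where
  seq := O.seq ⋙ idArrowF M
  unit c := (idArrowF M).map (O.unit c)
  comp p d b := eqToHom (by
      simp only [Functor.comp_obj]
      rw [tFin_idArrowF, tObj_idArrowF]
      rfl) ≫ (idArrowF M).map (O.comp p d b)

section PPOperad

variable [HasInitial M] [HasPushouts M]

/-- The hypothesis that the monoidal product preserves initial objects in each
variable (automatic when `M` is symmetric monoidal closed, i.e. when the monoidal
product commutes with colimits on both sides). -/
structure TensorPreservesInitial (M : Type u) [Category.{v} M] [MonoidalCategory M]
    [HasInitial M] : Prop where
  left : ∀ (X Y : M), IsInitial X → Nonempty (IsInitial (X ⊗ Y))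
  right : ∀ (X Y : M), IsInitial Y → Nonempty (IsInitial (X ⊗ Y))

/-- A pushout of initial objects is initial. -/
noncomputable def isInitialPushout {A B D : M} {f : A ⟶ B} {g : A ⟶ D}
    (hA : IsInitial A) (hB : IsInitial B) (hD : IsInitial D) :
    IsInitial (pushout f g) :=
  IsInitial.ofUniqueHom (fun Z => pushout.desc (hB.to Z) (hD.to Z) (hA.hom_ext _ _))
    (fun Z m => pushout.hom_ext ((hB.hom_ext _ _).trans (by rw [pushout.inl_desc]))
      ((hD.hom_ext _ _).trans (by rw [pushout.inr_desc])))

theorem ppObj_left_isInitial (h : TensorPreservesInitial M) {f g : Arrow M}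
    (hf : Nonempty (IsInitial f.left)) (hg : Nonempty (IsInitial g.left)) :
    Nonempty (IsInitial ((monTD M).ppObj f g).left) := by
  obtain ⟨hf⟩ := hf
  obtain ⟨hg⟩ := hg
  obtain ⟨h1⟩ := h.left f.left g.right hf
  obtain ⟨h2⟩ := h.right f.right g.left hg
  obtain ⟨h0⟩ := h.left f.left g.left hf
  exact ⟨isInitialPushout h0 h1 h2⟩

theorem tFin_pp_left_isInitial (h : TensorPreservesInitial M) : ∀ {n : ℕ} (F : Fin n → M),
    Nonempty (IsInitial ((ppArrTD M).tFin (fun i => (botArrowF M).obj (F i))).left) := by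
  intro n
  induction n with
  | zero => exact fun _ => ⟨initialIsInitial⟩
  | succ n ih =>
      intro F
      exact ppObj_left_isInitial h ⟨initialIsInitial⟩ (ih fun i => F i.succ)

theorem tFin_pp_right {n : ℕ} (F : Fin n → M) :
    ((ppArrTD M).tFin (fun i => (botArrowF M).obj (F i))).right = (monTD M).tFin F := by
  induction n with
  | zero => rfl
  | succ n ih =>
      rw [TensorData.tFin_succ ((monTD M))]
      show (F 0) ⊗ ((ppArrTD M).tFin fun i => (botArrowF M).obj (F i.succ)).right = _
      rw [ih (fun i => F i.succ)]
      rfl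

/-- The operad `O⃗□ = L₁O` in the arrow category with the pushout product structure.
Its algebras are the Smith `O`-ideals. -/
noncomputable def arrowPPOperad (h : TensorPreservesInitial M) {C : Type w}
    (O : OperadIn (monTD M) C) : OperadIn (ppArrTD M) C where
  seq := O.seq ⋙ botArrowF M
  unit c := (botArrowF M).map (O.unit c)
  comp p d b :=
    Arrow.homMk
      (u := ((ppObj_left_isInitial h ⟨initialIsInitial⟩
          (tFin_pp_left_isInitial h fun i => O.seq.obj (op (b i), ⟨p.toList.get i⟩))).some).to
          (⊥_ M))
      (v := eqToHom (by
        simp only [Functor.comp_obj]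
        show ((monTD M).ppObj ((botArrowF M).obj (O.seq.obj (op p, ⟨d⟩)))
            ((ppArrTD M).tFin fun i =>
              (botArrowF M).obj (O.seq.obj (op (b i), ⟨p.toList.get i⟩)))).right = _
        rw [TensorData.ppObj_right, tFin_pp_right]
        rfl) ≫ O.comp p d b)
      (((ppObj_left_isInitial h ⟨initialIsInitial⟩
          (tFin_pp_left_isInitial h fun i => O.seq.obj (op (b i), ⟨p.toList.get i⟩))).some).hom_ext
          _ _)

end PPOperad

end ArrowOperads

section CokerKer

variable (M : Type u) [Category.{v} M] [HasZeroMorphisms M]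

/-- The cokernel functor `M⃗□ ⥤ M⃗⊗`, sending `f : X₀ ⟶ X₁` to
`coker f : X₁ ⟶ coker f`. -/
@[simps]
noncomputable def cokerF [HasCokernels M] : Arrow M ⥤ Arrow M where
  obj f := Arrow.mk (cokernel.π f.hom)
  map {f g} α := Arrow.homMk (u := α.right)
    (v := cokernel.map f.hom g.hom α.left α.right (Arrow.w α).symm) (by simp)
  map_id f := by ext <;> simp [cokernel.map]
  map_comp α β := by
    ext
    · simp
    · apply coequalizer.hom_ext; simp [cokernel.map]

/-- The kernel functor `M⃗⊗ ⥤ M⃗□`, sending `g : Y₀ ⟶ Y₁` to `ker g : ker g ⟶ Y₀`. -/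
@[simps]
noncomputable def kerF [HasKernels M] : Arrow M ⥤ Arrow M where
  obj g := Arrow.mk (kernel.ι g.hom)
  map {f g} α := Arrow.homMk (u := kernel.map f.hom g.hom α.left α.right (Arrow.w α).symm)
    (v := α.left) (by simp)
  map_id f := by ext <;> simp [kernel.map]
  map_comp α β := by
    ext
    · apply equalizer.hom_ext; simp [kernel.map]
    · simp

end CokerKer

section Equivariant

/-- Left `Σₙ`-objects in `N` (objects with a left action of the symmetric group). -/
abbrev LeftSym (n : ℕ) (N : Type u) [Category.{v} N] :=
  SingleObj (Equiv.Perm (Fin n)) ⥤ N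

/-- Right `Σₙ`-objects in `N` (i.e. objects of `N^{Σₙᵒᵖ}`). -/
abbrev RightSym (n : ℕ) (N : Type u) [Category.{v} N] :=
  (SingleObj (Equiv.Perm (Fin n)))ᵒᵖ ⥤ N

variable {N : Type u} [Category.{v} N] {n : ℕ}

/-- The basepoint of `SingleObj (Σₙ)`. -/
abbrev symStar (n : ℕ) : SingleObj (Equiv.Perm (Fin n)) :=
  SingleObj.star (Equiv.Perm (Fin n))

/-- Reinterpret an endomorphism of the basepoint as a permutation. -/
def toPerm {x y : SingleObj (Equiv.Perm (Fin n))} (σ : x ⟶ y) : Equiv.Perm (Fin n) := σ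

/-- Reinterpret a permutation as an endomorphism of the basepoint. -/
def ofPerm (σ : Equiv.Perm (Fin n)) :
    symStar n ⟶ symStar n := σ

/-- Convert a right `Σₙ`-object into a left `Σₙ`-object via inverses. -/
def leftify (F : RightSym n N) : LeftSym n N where
  obj _ := F.obj (op (symStar n))
  map {x y} σ := F.map (ofPerm (toPerm σ)⁻¹).op
  map_id x := by
    have e : ofPerm (n := n) (toPerm (𝟙 x))⁻¹ = 𝟙 x := by
      show ((1 : Equiv.Perm (Fin n)))⁻¹ = (1 : Equiv.Perm (Fin n))
      rw [inv_one]
    show F.map (ofPerm (toPerm (𝟙 x))⁻¹).op = 𝟙 _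
    rw [e]
    exact F.map_id _
  map_comp {x y z} σ τ' := by
    have e : ofPerm (n := n) (toPerm (σ ≫ τ'))⁻¹ =
        ofPerm (toPerm τ')⁻¹ ≫ ofPerm (toPerm σ)⁻¹ := by
      show (toPerm τ' * toPerm σ : Equiv.Perm (Fin n))⁻¹ =
        (toPerm σ)⁻¹ * (toPerm τ')⁻¹
      rw [mul_inv_rev]
    show F.map (ofPerm (toPerm (σ ≫ τ'))⁻¹).op = F.map _ ≫ F.map _
    rw [e]
    exact F.map_comp _ _

/-- The uncurried bifunctor associated to tensor data. -/
@[simps]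
def TensorData.bif (τ : TensorData N) : N × N ⥤ N where
  obj X := τ.t X.1 X.2
  map f := τ.tmap f.1 f.2
  map_id X := τ.tmap_id X.1 X.2
  map_comp f g := τ.tmap_comp _ _ _ _

/-- The bifunctor `(X, g) ↦ (X ⊗ g : X ⊗ Y₀ ⟶ X ⊗ Y₁)`, tensoring an object with an
arrow. -/
@[simps]
def TensorData.bifArrow (τ : TensorData N) : N × Arrow N ⥤ Arrow N where
  obj X := Arrow.mk (τ.tmap (𝟙 X.1) X.2.hom)
  map {X Y} f := Arrow.homMk (u := τ.tmap f.1 f.2.left) (v := τ.tmap f.1 f.2.right)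
    (by dsimp; rw [← τ.tmap_comp, ← τ.tmap_comp, comp_id, id_comp, Arrow.w])
  map_id X := by
    ext
    · exact τ.tmap_id _ _
    · exact τ.tmap_id _ _
  map_comp f g := by
    ext
    · exact τ.tmap_comp _ _ _ _
    · exact τ.tmap_comp _ _ _ _

/-- The diagonal `Σₙ`-object `X ⊗ Y` obtained from a right `Σₙ`-object `X` and a left
`Σₙ`-object `Y`. -/
def diagObj (τ : TensorData N) (F : RightSym n N) (G : LeftSym n N) : LeftSym n N :=
  (leftify F).prod' G ⋙ τ.bif

/-- The diagonal `Σₙ`-arrow `X ⊗ g` obtained from a right `Σₙ`-object `X` of `N` and a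
left `Σₙ`-object `g` of arrows of `N`. -/
def diagArrow (τ : TensorData N) (F : RightSym n N) (G : LeftSym n (Arrow N)) :
    LeftSym n (Arrow N) :=
  (leftify F).prod' G ⋙ τ.bifArrow

/-- The `Σₙ`-coinvariants of a left `Σₙ`-object of arrows, as a map:
`(colim K₀) ⟶ (colim K₁)`. -/
noncomputable def coinvHom [HasColimitsOfSize.{0, 0} N] (K : LeftSym n (Arrow N)) :
    colimit (K ⋙ Arrow.leftFunc) ⟶ colimit (K ⋙ Arrow.rightFunc) :=
  colimMap (Functor.whiskerLeft K Arrow.leftToRight)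

/-- Iterated pushout product powers: `ppPow τ g n` is the `(n+1)`-st pushout product
power `g^{□(n+1)}` of the arrow `g` relative to tensor data `τ`. -/
noncomputable def ppPow (τ : TensorData N) [HasPushouts N] (g : Arrow N) : ℕ → Arrow N
  | 0 => g
  | n + 1 => τ.ppObj g (ppPow τ g n)

end Equivariant

section StructurePredicates

variable {M : Type u} [Category.{v} M]

/-- `σA` is the injective model structure on the arrow category of `(M, σ)`: weak
equivalences and cofibrations are defined entrywise. -/
def IsInjectiveStructure (σ : ModelStructure M) (σA : ModelStructure (Arrow M)) : Prop :=
  (∀ (f g : Arrow M) (α : f ⟶ g), σA.weq α ↔ (σ.weq α.left ∧ σ.weq α.right)) ∧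
  (∀ (f g : Arrow M) (α : f ⟶ g), σA.cof α ↔ (σ.cof α.left ∧ σ.cof α.right))

/-- `σA` is the projective model structure on the arrow category of `(M, σ)`: weak
equivalences and fibrations are defined entrywise. -/
def IsProjectiveStructure (σ : ModelStructure M) (σA : ModelStructure (Arrow M)) : Prop :=
  (∀ (f g : Arrow M) (α : f ⟶ g), σA.weq α ↔ (σ.weq α.left ∧ σ.weq α.right)) ∧
  (∀ (f g : Arrow M) (α : f ⟶ g), σA.fib α ↔ (σ.fib α.left ∧ σ.fib α.right))

/-- Entrywise trivial fibrations in a pi category; these are the trivial fibrations of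
the projective model structure on `M^C`. -/
def piTrivFib (C : Type w) (σ : ModelStructure M) : MorphismProperty (C → M) :=
  fun _ _ p => ∀ c, σ.trivFib (p c)

/-- Entrywise trivial fibrations in a functor category; these are the trivial
fibrations of the projective model structure on `M^D`. -/
def functorTrivFib (D : Type w) [Category.{w'} D] (σ : ModelStructure M) :
    MorphismProperty (D ⥤ M) :=
  fun _ _ p => ∀ d, σ.trivFib (p.app d)

/-- An object is cofibrant with respect to a class `T` of "trivial fibrations":
every map to the codomain of a map in `T` lifts. -/
def LLPCofibrant {A : Type u'} [Category.{v'} A] (T : MorphismProperty A) (X : A) : Prop :=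
  ∀ {Y Z : A} (p : Y ⟶ Z), T p → ∀ h : X ⟶ Z, ∃ l : X ⟶ Y, l ≫ p = h

/-- A Quillen adjunction between model structures: the right adjoint preserves
fibrations and trivial fibrations. -/
def IsQuillenAdjunction {D : Type u'} [Category.{v'} D]
    (σC : ModelStructure M) (σD : ModelStructure D)
    {F : M ⥤ D} {G : D ⥤ M} (_ : F ⊣ G) : Prop :=
  (∀ {X Y : D} (p : X ⟶ Y), σD.fib p → σC.fib (G.map p)) ∧
  (∀ {X Y : D} (p : X ⟶ Y), σD.trivFib p → σC.trivFib (G.map p))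

/-- A Quillen equivalence: a Quillen adjunction such that for `X` cofibrant and `Y`
fibrant, a map `F X ⟶ Y` is a weak equivalence iff its adjoint `X ⟶ G Y` is. -/
def IsQuillenEquivalence {D : Type u'} [Category.{v'} D]
    (σC : ModelStructure M) (σD : ModelStructure D)
    {F : M ⥤ D} {G : D ⥤ M} (adj : F ⊣ G) : Prop :=
  IsQuillenAdjunction σC σD adj ∧
  ∀ {X : M} {Y : D} (f : F.obj X ⟶ Y), σC.Cofibrant X → σD.Fibrant Y →
    (σD.weq f ↔ σC.weq ((adj.homEquiv X Y) f))

/-- An operad `O` is admissible relative to a model structure `σ` on the base: the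
category of `O`-algebras carries a cofibrantly generated model structure whose weak
equivalences and fibrations are defined entrywise. -/
def Admissible {N : Type u} [Category.{v} N] {C : Type w} (τ : TensorData N)
    (σ : ModelStructure N) (O : OperadIn τ C) : Prop :=
  ∃ σA : ModelStructure (AlgebraIn τ O), Nonempty (CofibGenData σA) ∧
    (∀ (A B : AlgebraIn τ O) (h : A ⟶ B),
      σA.weq h ↔ ∀ c, σ.weq (AlgHom.app h c)) ∧
    (∀ (A B : AlgebraIn τ O) (h : A ⟶ B),
      σA.fib h ↔ ∀ c, σ.fib (AlgHom.app h c))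

end StructurePredicates

section Conditions

variable {N : Type u} [Category.{v} N]

/-- Condition (♠) of White–Yau, for tensor data `τ` on `N`: for each `n ≥ 1` and each
right `Σₙ`-object `X`, the functor `X ⊗_{Σₙ} (−)^{□n}` sends trivial cofibrations into
some subclass of weak equivalences closed under pushout and transfinite composition.
(The `Σₙ`-equivariant structure on the power `g^{□n}` is quantified over all
equivariant structures with the given underlying object.) -/
def SpadeCondition [HasColimits N] [HasPushouts N] (τ : TensorData N)
    (σ : ModelStructure N) : Prop :=
  ∀ (n : ℕ) (X : RightSym (n + 1) N),
    ∃ W : MorphismProperty N,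
      (∀ ⦃A B : N⦄ (f : A ⟶ B), W f → σ.weq f) ∧
      StableUnderPushout W ∧
      StableUnderTransfiniteComposition W ∧
      ∀ (g : Arrow N), σ.trivCof g.hom →
        ∀ (P : LeftSym (n + 1) (Arrow N)),
          P.obj (symStar (n + 1)) = ppPow τ g n →
          W (coinvHom (diagArrow τ X P))

/-- Condition (♣)_{cof} of White–Yau for tensor data `τ`: for each `n ≥ 1` and each
underlying-cofibrant right `Σₙ`-object `X`, the functor `X ⊗_{Σₙ} (−)^{□n}` preserves
cofibrations. -/
def ClubCofCondition [HasColimits N] [HasPushouts N] (τ : TensorData N)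
    (σ : ModelStructure N) : Prop :=
  ∀ (n : ℕ) (X : RightSym (n + 1) N), σ.Cofibrant (X.obj (op (symStar (n + 1)))) →
    ∀ (g : Arrow N), σ.cof g.hom →
      ∀ (P : LeftSym (n + 1) (Arrow N)),
        P.obj (symStar (n + 1)) = ppPow τ g n →
        σ.cof (coinvHom (diagArrow τ X P))

/-- The pushout product axiom for a model structure, relative to tensor data `τ`. -/
def SatisfiesPPAxiom [HasPushouts N] (τ : TensorData N) (σ : ModelStructure N) : Prop :=
  (∀ (f g : Arrow N), σ.cof f.hom → σ.cof g.hom → σ.cof (τ.ppObj f g).hom) ∧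
  (∀ (f g : Arrow N), σ.cof f.hom → σ.cof g.hom → σ.weq f.hom ∨ σ.weq g.hom →
    σ.weq (τ.ppObj f g).hom)

variable {M : Type u} [Category.{v} M] [MonoidalCategory M]

/-- Condition (♥) of White–Yau: for each `n ≥ 1` and each `Σₙ`-equivariant map `f`
which is an underlying cofibration between cofibrant objects, the functor
`f □_{Σₙ} (−) : M^{Σₙ} → M` takes underlying cofibrations to cofibrations. -/
def HeartCondition [HasColimits M] (σ : ModelStructure M) : Prop :=
  ∀ (n : ℕ) (F : RightSym (n + 1) (Arrow M)),
    σ.cof (F.obj (op (symStar (n + 1)))).hom →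
    σ.Cofibrant (F.obj (op (symStar (n + 1)))).left →
    σ.Cofibrant (F.obj (op (symStar (n + 1)))).right →
    ∀ (G : LeftSym (n + 1) (Arrow M)), σ.cof (G.obj (symStar (n + 1))).hom →
      σ.cof (coinvHom (diagObj ((monTD M).pp (Arrow.mk (initial.to (𝟙_ M)))) F G))

/-- The strong commutative monoid axiom of White: `(−)^{□n}/Σₙ` preserves cofibrations
and trivial cofibrations. -/
def StrongCommutativeMonoidAxiom [HasColimits M] (σ : ModelStructure M) : Prop :=
  ∀ (n : ℕ) (g : Arrow M) (P : LeftSym (n + 1) (Arrow M)),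
    P.obj (symStar (n + 1)) = ppPow (monTD M) g n →
    (σ.cof g.hom → σ.cof (coinvHom P)) ∧ (σ.trivCof g.hom → σ.trivCof (coinvHom P))

end Conditions

section Stability

variable {M : Type u} [Category.{v} M] [HasZeroMorphisms M] [HasKernels M] [HasCokernels M]

/-- Stability of a model structure.  (A pointed model category is stable when its
homotopy category is triangulated; by Hovey's theorem this holds exactly when
cokernel/kernel give a Quillen equivalence between the projective model structure
on `M⃗□` and the injective model structure on `M⃗⊗`, which is the formulation used
here.) -/
def IsStable (σ : ModelStructure M) : Prop :=
  HasZeroObject M ∧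
  ∀ (σp σi : ModelStructure (Arrow M)), IsProjectiveStructure σ σp →
    IsInjectiveStructure σ σi →
    ∀ (adj : cokerF M ⊣ kerF M), IsQuillenEquivalence σp σi adj

end Stability

section MoreGadgets

variable {M : Type u} [Category.{v} M] [MonoidalCategory M]

/-- Folding the iterated tensor power of the unit onto the unit. -/
noncomputable def unitFold (M : Type u) [Category.{v} M] [MonoidalCategory M] :
    ∀ n : ℕ, ((monTD M).tFin (fun _ : Fin n => 𝟙_ M)) ⟶ 𝟙_ M
  | 0 => 𝟙 _
  | n + 1 => ((𝟙_ M) ◁ unitFold M n) ≫ (λ_ (𝟙_ M)).hom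

/-- The commutative operad: each entry is the monoidal unit. -/
noncomputable def commOperad (M : Type u) [Category.{v} M] [MonoidalCategory M] :
    OperadIn (monTD M) PUnit where
  seq := (Functor.const (SymIndex PUnit)).obj (𝟙_ M)
  unit _ := 𝟙 (𝟙_ M)
  comp p d b := ((𝟙_ M) ◁ unitFold M _) ≫ (λ_ (𝟙_ M)).hom

section Bimodules

variable {C : Type w} (O : OperadIn (monTD M) C)

/-- A bimodule over an algebra `A` for the operad `O`. -/
structure Bimodule (A : AlgebraIn (monTD M) O) : Type (max u v w) where
  X : C → M
  act : ∀ (p : Profile C) (d : C) (i : Fin p.toList.length),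
    (monTD M).t (O.seq.obj (op p, ⟨d⟩))
      ((monTD M).tFin fun j =>
        if j = i then X (p.toList.get j) else A.carrier (p.toList.get j))
      ⟶ X d

variable {O}

/-- The comparison maps `(mixed family with X at position i) ⟶ (family of A's)`
induced by a family of maps `f : X ⟶ A`: apply `f` in position `i`. -/
def mixMap {X A : C → M} (f : ∀ c, X c ⟶ A c) {n : ℕ} (cols : Fin n → C) (i : Fin n) :
    ∀ j, (if j = i then X (cols j) else A (cols j)) ⟶ A (cols j) := fun j =>
  if h : j = i then eqToHom (if_pos h) ≫ f (cols j) else eqToHom (if_neg h)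

/-- From the family with `X` in positions `i` and `j`, apply `f` at position `j`,
landing in the family with `X` at position `i`. -/
def dropSecond {X A : C → M} (f : ∀ c, X c ⟶ A c) {n : ℕ} (cols : Fin n → C) (i j : Fin n) :
    ∀ k, (if k = i ∨ k = j then X (cols k) else A (cols k)) ⟶
      (if k = i then X (cols k) else A (cols k)) := fun k =>
  if h1 : k = i then eqToHom (by rw [if_pos (Or.inl h1), if_pos h1])
  else if h2 : k = j then
    eqToHom (if_pos (Or.inr h2)) ≫ f (cols k) ≫ eqToHom ((if_neg h1).symm)
  else eqToHom (by rw [if_neg (not_or.mpr ⟨h1, h2⟩), if_neg h1])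

/-- From the family with `X` in positions `i` and `j`, apply `f` at position `i`,
landing in the family with `X` at position `j`. -/
def dropFirst {X A : C → M} (f : ∀ c, X c ⟶ A c) {n : ℕ} (cols : Fin n → C) (i j : Fin n) :
    ∀ k, (if k = i ∨ k = j then X (cols k) else A (cols k)) ⟶
      (if k = j then X (cols k) else A (cols k)) := fun k =>
  if h2 : k = j then eqToHom (by rw [if_pos (Or.inr h2), if_pos h2])
  else if h1 : k = i then
    eqToHom (if_pos (Or.inl h1)) ≫ f (cols k) ≫ eqToHom ((if_neg h2).symm)
  else eqToHom (by rw [if_neg (not_or.mpr ⟨h1, h2⟩), if_neg h2])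

/-- The data described in Proposition `smith-unravel` of White–Yau: an `O`-algebra
`Y`, a `Y`-bimodule `X`, and a `Y`-bimodule map `f : X ⟶ Y` satisfying the
compatibility condition (two-x). -/
structure SmithTriple (O : OperadIn (monTD M) C) : Type (max u v w) where
  alg : AlgebraIn (monTD M) O
  mod : Bimodule O alg
  f : ∀ c, mod.X c ⟶ alg.carrier c
  /-- `f` is a map of `alg`-bimodules from `mod` to `alg` itself. -/
  f_bimod : ∀ (p : Profile C) (d : C) (i : Fin p.toList.length),
    mod.act p d i ≫ f d =
      (monTD M).tmap (𝟙 (O.seq.obj (op p, ⟨d⟩)))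
        ((monTD M).tFinMap (mixMap f (fun j => p.toList.get j) i)) ≫ alg.act p d
  /-- the diagram (two-x): using `f` in position `i` or in position `j` first, then
  acting, gives the same composite. -/
  two_x : ∀ (p : Profile C) (d : C) (i j : Fin p.toList.length), i ≠ j →
    (monTD M).tmap (𝟙 (O.seq.obj (op p, ⟨d⟩)))
        ((monTD M).tFinMap (dropSecond f (fun k => p.toList.get k) i j)) ≫ mod.act p d i =
    (monTD M).tmap (𝟙 (O.seq.obj (op p, ⟨d⟩)))
        ((monTD M).tFinMap (dropFirst f (fun k => p.toList.get k) i j)) ≫ mod.act p d j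

end Bimodules

section Concentrated

variable {N : Type u} [Category.{v} N] [HasInitial N] {C : Type w} [DecidableEq C]

/-- The `C`-colored object concentrated at the color `c`, with all other entries
initial. -/
noncomputable def conc (c : C) (x : N) : C → N := fun c' => if c' = c then x else ⊥_ N

/-- The morphism of concentrated objects induced by `φ : x ⟶ y`. -/
noncomputable def concMap (c : C) {x y : N} (φ : x ⟶ y) : conc (N := N) c x ⟶ conc c y :=
  fun c' =>
    if h : c' = c then
      eqToHom (by simp only [conc, if_pos h]) ≫ φ ≫ eqToHom (by simp only [conc, if_pos h])
    else eqToHom (by simp only [conc, if_neg h])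

end Concentrated

section Corner

variable {N : Type u} [Category.{v} N] [HasPushouts N]

/-- The pushout corner map of a morphism `Q : A ⟶ B` of the arrow category of `N`
(viewing `Q` as a commutative square in `N`). -/
noncomputable def cornerMap {A B : Arrow N} (Q : A ⟶ B) : pushout A.hom Q.left ⟶ B.right :=
  pushout.desc Q.right B.hom (Arrow.w Q).symm

end Corner

section SigmaCof

variable {N : Type u} [Category.{v} N] {C : Type w}

/-- A symmetric sequence is `Σ_C`-cofibrant: cofibrant in the projective model
structure on the diagram category `N^{Σ_Cᵒᵖ × C}` (formulated by the lifting property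
against entrywise trivial fibrations). -/
def SeqCofibrant (σ : ModelStructure N) (S : SymIndex C ⥤ N) : Prop :=
  LLPCofibrant (functorTrivFib (SymIndex C) σ) S

end SigmaCof

end MoreGadgets

section AlgebraStructures

variable {M : Type u} [Category.{v} M] {C : Type w}

/-- `σA` is the transferred ("Smith ideal") model structure on algebras over an operad
in the arrow category of `M`: weak equivalences and fibrations are defined colorwise in
the projective model structure on `M⃗`, i.e. entrywise in `M`. -/
def IsEntrywiseArrowStructure (σ : ModelStructure M) {τ : TensorData (Arrow M)}
    (O : OperadIn τ C) (σA : ModelStructure (AlgebraIn τ O)) : Prop :=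
  (∀ (A B : AlgebraIn τ O) (h : A ⟶ B),
    σA.weq h ↔ ∀ c, σ.weq (AlgHom.app h c).left ∧ σ.weq (AlgHom.app h c).right) ∧
  (∀ (A B : AlgebraIn τ O) (h : A ⟶ B),
    σA.fib h ↔ ∀ c, σ.fib (AlgHom.app h c).left ∧ σ.fib (AlgHom.app h c).right)

/-- `σA` is the transferred model structure on algebras over an operad in the arrow
category of `M`, with weak equivalences and fibrations defined colorwise in the
injective model structure `σi` on `M⃗`. -/
def IsEntrywiseInjStructure (σi : ModelStructure (Arrow M)) {τ : TensorData (Arrow M)}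
    (O : OperadIn τ C) (σA : ModelStructure (AlgebraIn τ O)) : Prop :=
  (∀ (A B : AlgebraIn τ O) (h : A ⟶ B), σA.weq h ↔ ∀ c, σi.weq (AlgHom.app h c)) ∧
  (∀ (A B : AlgebraIn τ O) (h : A ⟶ B), σA.fib h ↔ ∀ c, σi.fib (AlgHom.app h c))

/-- The trivial fibrations of the transferred model structure on algebras over an
operad in `M⃗□`: maps which are colorwise trivial fibrations in `M⃗_proj`, i.e.
entrywise trivial fibrations in `M`. -/
def algTrivFib (σ : ModelStructure M) {τ : TensorData (Arrow M)} (O : OperadIn τ C) :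
    MorphismProperty (AlgebraIn τ O) :=
  fun _ _ p => ∀ c, σ.trivFib (AlgHom.app p c).left ∧ σ.trivFib (AlgHom.app p c).right

/-- Entrywise trivial fibrations in `(M⃗_proj)^C`. -/
def piArrowProjTrivFib (C : Type w) (σ : ModelStructure M) :
    MorphismProperty (C → Arrow M) :=
  fun _ _ p => ∀ c, σ.trivFib (p c).left ∧ σ.trivFib (p c).right

/-- Entrywise trivial fibrations in `(M⃗_proj)^D` for a diagram category. -/
def functorArrowProjTrivFib (D : Type w) [Category.{w'} D] (σ : ModelStructure M) :
    MorphismProperty (D ⥤ Arrow M) :=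
  fun _ _ p => ∀ d, σ.trivFib (p.app d).left ∧ σ.trivFib (p.app d).right

end AlgebraStructures

section MainHelpers

variable {M : Type u} [Category.{v} M] [MonoidalCategory M]
  [HasLimits M] [HasColimits M] [HasZeroMorphisms M] [HasKernels M] [HasCokernels M]
  {C : Type w}

/-- The statement that an adjunction between Smith `O`-ideals and `O`-algebra maps
which is given entrywise by the cokernel (left adjoint) and the kernel (right
adjoint) is a Quillen adjunction with respect to the transferred model structures. -/
def CokerKerIsQuillenAdjunction (σ : ModelStructure M) (h : TensorPreservesInitial M)
    (O : OperadIn (monTD M) C) : Prop :=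
  ∀ (Fc : AlgebraIn (ppArrTD M) (arrowPPOperad h O) ⥤
      AlgebraIn (arrTD M) (arrowTensorOperad O))
    (Gk : AlgebraIn (arrTD M) (arrowTensorOperad O) ⥤
      AlgebraIn (ppArrTD M) (arrowPPOperad h O))
    (adj : Fc ⊣ Gk),
    Fc ⋙ forgetAlg (arrTD M) (arrowTensorOperad O) =
      forgetAlg (ppArrTD M) (arrowPPOperad h O) ⋙ Functor.pi (fun _ : C => cokerF M) →
    Gk ⋙ forgetAlg (ppArrTD M) (arrowPPOperad h O) =
      forgetAlg (arrTD M) (arrowTensorOperad O) ⋙ Functor.pi (fun _ : C => kerF M) →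
    ∀ (σS : ModelStructure (AlgebraIn (ppArrTD M) (arrowPPOperad h O))),
      IsEntrywiseArrowStructure σ (arrowPPOperad h O) σS →
    ∀ (σinj : ModelStructure (Arrow M)), IsInjectiveStructure σ σinj →
    ∀ (σT : ModelStructure (AlgebraIn (arrTD M) (arrowTensorOperad O))),
      IsEntrywiseInjStructure σinj (arrowTensorOperad O) σT →
    IsQuillenAdjunction σS σT adj

/-- The statement that the entrywise cokernel–kernel adjunction between Smith
`O`-ideals and `O`-algebra maps is a Quillen equivalence with respect to the
transferred model structures. -/
def CokerKerIsQuillenEquivalence (σ : ModelStructure M) (h : TensorPreservesInitial M)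
    (O : OperadIn (monTD M) C) : Prop :=
  ∀ (Fc : AlgebraIn (ppArrTD M) (arrowPPOperad h O) ⥤
      AlgebraIn (arrTD M) (arrowTensorOperad O))
    (Gk : AlgebraIn (arrTD M) (arrowTensorOperad O) ⥤
      AlgebraIn (ppArrTD M) (arrowPPOperad h O))
    (adj : Fc ⊣ Gk),
    Fc ⋙ forgetAlg (arrTD M) (arrowTensorOperad O) =
      forgetAlg (ppArrTD M) (arrowPPOperad h O) ⋙ Functor.pi (fun _ : C => cokerF M) →
    Gk ⋙ forgetAlg (ppArrTD M) (arrowPPOperad h O) =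
      forgetAlg (arrTD M) (arrowTensorOperad O) ⋙ Functor.pi (fun _ : C => kerF M) →
    ∀ (σS : ModelStructure (AlgebraIn (ppArrTD M) (arrowPPOperad h O))),
      IsEntrywiseArrowStructure σ (arrowPPOperad h O) σS →
    ∀ (σinj : ModelStructure (Arrow M)), IsInjectiveStructure σ σinj →
    ∀ (σT : ModelStructure (AlgebraIn (arrTD M) (arrowTensorOperad O))),
      IsEntrywiseInjStructure σinj (arrowTensorOperad O) σT →
    IsQuillenEquivalence σS σT adj

end MainHelpers

/-! The right adjoint is the kernel computed colorwise, so it suffices that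
`ker : M⃗_inj ⥤ M⃗_proj` preserves fibrations and trivial fibrations. The two components of
`ker q` are `(ker q).left = kernel.map q` and `(ker q).right = q.left`, i.e. the images of `q`
under the right adjoints of `X ↦ (X ⟶ 0)` and `X ↦ 𝟙 X`. Both left adjoints send (trivial)
cofibrations of `M` to entrywise (trivial) cofibrations, i.e. to injective ones, so their right
adjoints preserve (trivial) fibrations by adjoint transposition of lifting problems. -/

namespace ModelStructure

variable (σ : ModelStructure M)

theorem trivCof_id (X : M) : σ.trivCof (𝟙 X) := by
  obtain ⟨Z, g, k, hg, hwg, -, hgk⟩ := σ.fact_trivCof_fib (𝟙 X)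
  let r : RetractArrow (𝟙 X) g :=
    { i := Arrow.homMk (𝟙 X) g
      r := Arrow.homMk (𝟙 X) k }
  exact ⟨σ.cof_retract _ _ r.i r.r r.retract hg, σ.weq_retract _ _ r.i r.r r.retract hwg⟩

theorem fib_of_forall_hasLiftingProperty {X Y : M} (p : X ⟶ Y)
    (H : ∀ ⦃A B : M⦄ (i : A ⟶ B), σ.trivCof i → HasLiftingProperty i p) : σ.fib p := by
  obtain ⟨Z, i, q, hi, hwi, hq, rfl⟩ := σ.fact_trivCof_fib p
  have := H i ⟨hi, hwi⟩
  let r := RetractArrow.ofRightLiftingProperty (rfl : i ≫ q = i ≫ q)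
  exact σ.fib_retract _ _ r.i r.r r.retract hq

theorem trivFib_of_forall_hasLiftingProperty {X Y : M} (p : X ⟶ Y)
    (H : ∀ ⦃A B : M⦄ (i : A ⟶ B), σ.cof i → HasLiftingProperty i p) : σ.trivFib p := by
  obtain ⟨Z, i, q, hi, hq, hwq, rfl⟩ := σ.fact_cof_trivFib p
  have := H i hi
  let r := RetractArrow.ofRightLiftingProperty (rfl : i ≫ q = i ≫ q)
  exact ⟨σ.fib_retract _ _ r.i r.r r.retract hq, σ.weq_retract _ _ r.i r.r r.retract hwq⟩

variable {D : Type u'} [Category.{v'} D] (τ : ModelStructure D) {L : M ⥤ D} {R : D ⥤ M}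

theorem fib_map_of_adjunction (adj : L ⊣ R)
    (hL : ∀ ⦃A B : M⦄ (i : A ⟶ B), σ.trivCof i → τ.trivCof (L.map i))
    {X Y : D} {p : X ⟶ Y} (hp : τ.fib p) : σ.fib (R.map p) :=
  σ.fib_of_forall_hasLiftingProperty _ fun _ _ i hi =>
    (adj.hasLiftingProperty_iff i p).1 (τ.lift_trivCof_fib _ p (hL i hi).1 (hL i hi).2 hp)

theorem trivFib_map_of_adjunction (adj : L ⊣ R)
    (hL : ∀ ⦃A B : M⦄ (i : A ⟶ B), σ.cof i → τ.cof (L.map i))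
    {X Y : D} {p : X ⟶ Y} (hp : τ.trivFib p) : σ.trivFib (R.map p) :=
  σ.trivFib_of_forall_hasLiftingProperty _ fun _ _ i hi =>
    (adj.hasLiftingProperty_iff i p).1 (τ.lift_cof_trivFib _ p (hL i hi) hp.1 hp.2)

end ModelStructure

section ArrowAdjunctions

variable (M)

def idArrowAdjunction : idArrowF M ⊣ Arrow.leftFunc where
  unit := { app := fun X => 𝟙 X, naturality := fun _ _ f => (comp_id f).trans (id_comp f).symm }
  counit :=
    { app := fun f => Arrow.homMk (𝟙 f.left) f.hom
      naturality := fun _ _ α => by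
        ext
        · exact (comp_id α.left).trans (id_comp α.left).symm
        · exact Arrow.w α }
  left_triangle_components X := by ext <;> exact comp_id _
  right_triangle_components f := comp_id _

open ZeroObject in
noncomputable def zeroArrowF [HasZeroObject M] [HasZeroMorphisms M] : M ⥤ Arrow M where
  obj X := Arrow.mk (0 : X ⟶ 0)
  map f := Arrow.homMk f (𝟙 0)

noncomputable def zeroArrowKerAdjunction [HasZeroObject M] [HasZeroMorphisms M] [HasKernels M] :
    zeroArrowF M ⊣ kerF M ⋙ Arrow.leftFunc :=
  Adjunction.mkOfHomEquiv
    { homEquiv X f :=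
        { toFun α := kernel.lift f.hom α.left ((Arrow.w α).trans zero_comp)
          invFun u := Arrow.homMk (u ≫ kernel.ι f.hom) 0
            (by erw [assoc, kernel.condition, comp_zero, comp_zero])
          left_inv α := by
            ext
            · exact kernel.lift_ι _ _ _
            · exact HasZeroObject.from_zero_ext _ _
          right_inv u := equalizer.hom_ext (kernel.lift_ι _ _ _) }
      homEquiv_naturality_left_symm f g := by
        ext
        · exact assoc _ _ _
        · exact HasZeroObject.from_zero_ext _ _
      homEquiv_naturality_right f g := by
        apply equalizer.hom_ext
        erw [kernel.lift_ι, assoc, kernel.lift_ι, ← assoc, kernel.lift_ι]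
        rfl }

end ArrowAdjunctions

namespace IsInjectiveStructure

variable {σ : ModelStructure M} {σinj : ModelStructure (Arrow M)}

theorem trivCof_map_idArrowF (hinj : IsInjectiveStructure σ σinj) {A B : M} {i : A ⟶ B}
    (hi : σ.trivCof i) : σinj.trivCof ((idArrowF M).map i) :=
  ⟨(hinj.2 _ _ _).2 ⟨hi.1, hi.1⟩, (hinj.1 _ _ _).2 ⟨hi.2, hi.2⟩⟩

variable [HasZeroObject M] [HasZeroMorphisms M]

open ZeroObject in
theorem cof_map_zeroArrowF (hinj : IsInjectiveStructure σ σinj) {A B : M} {i : A ⟶ B}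
    (hi : σ.cof i) : σinj.cof ((zeroArrowF M).map i) :=
  (hinj.2 _ _ _).2 ⟨hi, (σ.trivCof_id 0).1⟩

open ZeroObject in
theorem trivCof_map_zeroArrowF (hinj : IsInjectiveStructure σ σinj) {A B : M} {i : A ⟶ B}
    (hi : σ.trivCof i) : σinj.trivCof ((zeroArrowF M).map i) :=
  ⟨hinj.cof_map_zeroArrowF hi.1, (hinj.1 _ _ _).2 ⟨hi.2, (σ.trivCof_id 0).2⟩⟩

variable [HasKernels M] {f g : Arrow M} {q : f ⟶ g}

theorem fib_kerF_map (hinj : IsInjectiveStructure σ σinj) (hq : σinj.fib q) :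
    σ.fib ((kerF M).map q).left ∧ σ.fib ((kerF M).map q).right :=
  ⟨σ.fib_map_of_adjunction σinj (zeroArrowKerAdjunction M)
      (fun _ _ _ => hinj.trivCof_map_zeroArrowF) hq,
    σ.fib_map_of_adjunction σinj (idArrowAdjunction M)
      (fun _ _ _ => hinj.trivCof_map_idArrowF) hq⟩

theorem weq_kerF_map (hinj : IsInjectiveStructure σ σinj) (hq : σinj.trivFib q) :
    σ.weq ((kerF M).map q).left ∧ σ.weq ((kerF M).map q).right :=
  ⟨(σ.trivFib_map_of_adjunction σinj (zeroArrowKerAdjunction M)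
      (fun _ _ _ => hinj.cof_map_zeroArrowF) hq).2,
    ((hinj.1 _ _ q).1 hq.2).1⟩

end IsInjectiveStructure

theorem entrywise_iff_of_comp_forgetAlg_eq {C : Type w} {D : Type u'} [Category.{v'} D]
    {τ : TensorData (Arrow M)} {O : OperadIn τ C} {G : D ⥤ AlgebraIn τ O}
    {U : D ⥤ (C → Arrow M)} {K : Arrow M ⥤ Arrow M}
    (hG : G ⋙ forgetAlg τ O = U ⋙ Functor.pi fun _ => K) (W : MorphismProperty M)
    {X Y : D} (p : X ⟶ Y) (c : C) :
    (W ((G.map p).app c).left ∧ W ((G.map p).app c).right) ↔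
      (W (K.map (U.map p c)).left ∧ W (K.map (U.map p c)).right) := by
  -- comparing as arrows avoids transporting along the equality of carriers
  have h : Arrow.mk ((G.map p).app c) = Arrow.mk (K.map (U.map p c)) :=
    congrArg (fun F => (F ⋙ Pi.eval _ c).mapArrow.obj (Arrow.mk p)) hG
  exact Iff.of_eq (congrArg (fun a : Arrow (Arrow M) => W a.hom.left ∧ W a.hom.right) h)

theorem statement7_general {M : Type u} [Category.{v} M] [MonoidalCategory M]
    [HasColimits M]
    [HasZeroObject M] [HasZeroMorphisms M] [HasKernels M]
    (σ : ModelStructure M)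
    (h : TensorPreservesInitial M) {C : Type w} (O : OperadIn (monTD M) C) :
    CokerKerIsQuillenAdjunction σ h O := by
  intro _ Gk _ _ hGk σS hσS σinj hinj σT hσT
  have entrywise (W : MorphismProperty M) {A B} (p : A ⟶ B) (c : C) :=
    entrywise_iff_of_comp_forgetAlg_eq hGk W p c
  have fib_map {A B} (p : A ⟶ B) (hp : σT.fib p) : σS.fib (Gk.map p) :=
    (hσS.2 _ _ _).2 fun c => (entrywise _ p c).2 (hinj.fib_kerF_map ((hσT.2 _ _ p).1 hp c))
  refine ⟨fib_map, fun p hp => ⟨fib_map p hp.1, (hσS.1 _ _ _).2 fun c => ?_⟩⟩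
  exact (entrywise _ p c).2 (hinj.weq_kerF_map ⟨(hσT.2 _ _ p).1 hp.1 c, (hσT.1 _ _ p).1 hp.2 c⟩)

/-- Prop. 4.10 of White–Yau: for a pointed cofibrantly generated
monoidal model category satisfying (♠) with small (co)domains of generating (trivial)
cofibrations, and a `C`-colored operad `O`, the entrywise cokernel–kernel adjunction
between Smith `O`-ideals and `O`-algebra maps is a Quillen adjunction. -/
theorem statement7 {M : Type u} [Category.{v} M] [MonoidalCategory M]
    [SymmetricCategory M] [HasLimits M] [HasColimits M]
    [HasZeroObject M] [HasZeroMorphisms M] [HasKernels M] [HasCokernels M]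
    (σ : ModelStructure M) (hpp : SatisfiesPPAxiom (monTD M) σ)
    (hspade : SpadeCondition (monTD M) σ)
    (d : CofibGenData σ) (hdom : d.SmallDomains) (hcod : d.SmallCodomains)
    (h : TensorPreservesInitial M) {C : Type w} (O : OperadIn (monTD M) C) :
    CokerKerIsQuillenAdjunction σ h O :=
  statement7_general σ h O

end SmithIdeals
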